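/- arXiv:0812.4855 — 2 statements merged into one kernel-verified Lean document; each statement's English description precedes it below -/
import Mathlib

section
/- Let (g, B, h, h') be a Manin triple with dual bases {e_i} of h and {e^i} of h', and set v' := Σ_i [e^i, e_i]. Write v' = w + w* with w = P_h(v') ∈ h and w* = P_{h'}(v') ∈ h', where P_h, P_{h'} are the projections associated to the decomposition g = h ⊕ h'. Then: (1) for every x ∈ h, B(w*, x) equals the trace of the endomorphism of h sending y ↦ [y, x] (note [y,x] ∈ h since h is a subalgebra); and (2) for every ξ ∈ h', B(w, ξ) equals the trace of the endomorphism of h sending y ↦ P_h([y, ξ]). -/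
open Module

/-!
Pairing with the dual basis `e^i` reads off the `e_i`-coordinate of `P_h z`, because `h'` is
isotropic. Hence the trace of the compression `P_h ∘ (-ad z) ∘ incl_h` is
`Σ_i B(e^i, [e_i, z]) = B(v', z)` by invariance. Taking `z = x ∈ h` kills `B(w, x)` and taking
`z = ξ ∈ h'` kills `B(w*, ξ)`, since `h` and `h'` are isotropic.
-/

section

variable {R M ι : Type*} [CommRing R] [AddCommGroup M] [Module R M] [DecidableEq ι]

theorem Module.Basis.repr_apply_eq_of_apply_eq_ite
    (e : Basis ι R M) (φ : ι → Dual R M) (hφ : ∀ i j, φ i (e j) = if i = j then 1 else 0)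
    (y : M) (i : ι) : e.repr y i = φ i y := by
  have : e.coord i = φ i := e.ext fun j => by
    simp [hφ i j, Basis.coord_apply, Finsupp.single_apply, eq_comm]
  rw [← this, Basis.coord_apply]

section Pairing

variable (B : M →ₗ[R] M →ₗ[R] R) {p q : Submodule R M} (hpq : IsCompl p q)
  (e : Basis ι R p) (e' : ι → q) (he : ∀ i j, B (e' i : M) (e j : M) = if i = j then 1 else 0)
  (hiso : ∀ x ∈ q, ∀ y ∈ q, B x y = 0)
include he hiso

theorem repr_projectionOnto_eq_pairing (z : M) (i : ι) :
    e.repr (p.projectionOnto q hpq z) i = B (e' i) z := by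
  rw [e.repr_apply_eq_of_apply_eq_ite (fun i => B (e' i) ∘ₗ p.subtype) he]
  calc B (e' i) (p.projectionOnto q hpq z : M)
      = B (e' i) (p.projectionOnto q hpq z + q.projectionOnto p hpq.symm z : M) := by
        rw [map_add, hiso _ (e' i).2 _ (Subtype.prop _), add_zero]
    _ = B (e' i) z := congrArg _ (Submodule.projection_add_projection_eq_self hpq z)

theorem trace_projectionOnto_comp_comp_subtype [Fintype ι] (f : M →ₗ[R] M) :
    LinearMap.trace R p (p.projectionOnto q hpq ∘ₗ f ∘ₗ p.subtype) =
      ∑ i, B (e' i) (f (e i)) := by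
  rw [LinearMap.trace_eq_matrix_trace R e, Matrix.trace]
  refine Finset.sum_congr rfl fun i _ => ?_
  rw [Matrix.diag_apply, LinearMap.toMatrix_apply]
  exact repr_projectionOnto_eq_pairing B hpq e e' he hiso _ i

end Pairing

theorem trace_projectionOnto_comp_neg_ad_comp_subtype [Fintype ι] {g : Type*} [LieRing g]
    [LieAlgebra R g] (B : g →ₗ[R] g →ₗ[R] R) (hinv : ∀ a b c : g, B ⁅a, b⁆ c = B a ⁅b, c⁆)
    {p q : Submodule R g} (hpq : IsCompl p q) (hiso : ∀ x ∈ q, ∀ y ∈ q, B x y = 0)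
    (e : Basis ι R p) (e' : ι → q) (he : ∀ i j, B (e' i : g) (e j : g) = if i = j then 1 else 0)
    (z : g) :
    LinearMap.trace R p (p.projectionOnto q hpq ∘ₗ (-LieAlgebra.ad R g z) ∘ₗ p.subtype) =
      B (∑ i, ⁅(e' i : g), (e i : g)⁆) z := by
  rw [trace_projectionOnto_comp_comp_subtype B hpq e e' he hiso, map_sum,
    LinearMap.sum_apply]
  refine Finset.sum_congr rfl fun i _ => ?_
  rw [hinv, LinearMap.neg_apply, LieAlgebra.ad_apply, lie_skew]

end

theorem manin_triple_modular_element_traces_general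
    {g : Type*} [LieRing g] [LieAlgebra ℂ g]
    (B : g →ₗ[ℂ] g →ₗ[ℂ] ℂ)
    (hinv : ∀ a b c : g, B ⁅a, b⁆ c = B a ⁅b, c⁆)
    (h h' : Submodule ℂ g)
    (hiso : ∀ x ∈ h, ∀ y ∈ h, B x y = 0)
    (hiso' : ∀ x ∈ h', ∀ y ∈ h', B x y = 0)
    (hcompl : IsCompl h h')
    (n : ℕ)
    (e : Basis (Fin n) ℂ h) (e' : Basis (Fin n) ℂ h')
    (he : ∀ i j, B (e' i : g) (e j : g) = if i = j then 1 else 0)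
    (v' : g) (hv' : v' = ∑ i, ⁅(e' i : g), (e i : g)⁆)
    (w : h) (hw : w = h.linearProjOfIsCompl h' hcompl v')
    (wstar : h') (hwstar : wstar = h'.linearProjOfIsCompl h hcompl.symm v') :
    (∀ x : h, B (wstar : g) (x : g) =
      LinearMap.trace ℂ h
        ((h.linearProjOfIsCompl h' hcompl) ∘ₗ
          (-(LieAlgebra.ad ℂ g (x : g))) ∘ₗ h.subtype)) ∧
    (∀ ξ : h', B (w : g) (ξ : g) =
      LinearMap.trace ℂ h
        ((h.linearProjOfIsCompl h' hcompl) ∘ₗ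
          (-(LieAlgebra.ad ℂ g (ξ : g))) ∘ₗ h.subtype)) := by
  have htrace (z : g) : LinearMap.trace ℂ h
      (h.linearProjOfIsCompl h' hcompl ∘ₗ (-LieAlgebra.ad ℂ g z) ∘ₗ h.subtype) = B v' z :=
    hv' ▸ trace_projectionOnto_comp_neg_ad_comp_subtype B hinv hcompl hiso' e e' he z
  have hsum : (w : g) + (wstar : g) = v' := by
    rw [hw, hwstar]
    exact Submodule.projection_add_projection_eq_self hcompl v'
  refine ⟨fun x => ?_, fun ξ => ?_⟩
  · rw [htrace, ← hsum, map_add, LinearMap.add_apply, hiso _ w.2 _ x.2, zero_add]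
  · rw [htrace, ← hsum, map_add, LinearMap.add_apply, hiso' _ wstar.2 _ ξ.2, add_zero]

/-- Let `(g, B, h, h')` be a Manin triple with dual bases `{e_i}` of `h`
and `{e^i}` of `h'`, set `v' = Σ_i [e^i, e_i]`, and write `v' = w + w*` with
`w = P_h v' ∈ h`, `w* = P_{h'} v' ∈ h'`.  Then:
(1) for every `x ∈ h`, `B(w*, x)` is the trace of the endomorphism of `h` sending
`y ↦ [y, x]` (expressed here as `P_h ∘ (-ad x) ∘ incl_h`, which sends `y ↦ P_h [y,x] = [y,x]`);
(2) for every `ξ ∈ h'`, `B(w, ξ)` is the trace of the endomorphism of `h` sending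
`y ↦ P_h [y, ξ]`. -/
theorem manin_triple_modular_element_traces
    {g : Type*} [LieRing g] [LieAlgebra ℂ g] [FiniteDimensional ℂ g]
    (B : g →ₗ[ℂ] g →ₗ[ℂ] ℂ)
    (hsymm : ∀ x y : g, B x y = B y x)
    (hnondeg : ∀ x : g, (∀ y : g, B x y = 0) → x = 0)
    (hinv : ∀ a b c : g, B ⁅a, b⁆ c = B a ⁅b, c⁆)
    (h h' : Submodule ℂ g)
    (hsub : ∀ x ∈ h, ∀ y ∈ h, ⁅x, y⁆ ∈ h)
    (hsub' : ∀ x ∈ h', ∀ y ∈ h', ⁅x, y⁆ ∈ h')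
    (hiso : ∀ x ∈ h, ∀ y ∈ h, B x y = 0)
    (hiso' : ∀ x ∈ h', ∀ y ∈ h', B x y = 0)
    (hcompl : IsCompl h h')
    (n : ℕ)
    (e : Basis (Fin n) ℂ h) (e' : Basis (Fin n) ℂ h')
    (he : ∀ i j, B (e' i : g) (e j : g) = if i = j then 1 else 0)
    (v' : g) (hv' : v' = ∑ i, ⁅(e' i : g), (e i : g)⁆)
    (w : h) (hw : w = h.linearProjOfIsCompl h' hcompl v')
    (wstar : h') (hwstar : wstar = h'.linearProjOfIsCompl h hcompl.symm v') :
    (∀ x : h, B (wstar : g) (x : g) =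
      LinearMap.trace ℂ h
        ((h.linearProjOfIsCompl h' hcompl) ∘ₗ
          (-(LieAlgebra.ad ℂ g (x : g))) ∘ₗ h.subtype)) ∧
    (∀ ξ : h', B (w : g) (ξ : g) =
      LinearMap.trace ℂ h
        ((h.linearProjOfIsCompl h' hcompl) ∘ₗ
          (-(LieAlgebra.ad ℂ g (ξ : g))) ∘ₗ h.subtype)) :=
  manin_triple_modular_element_traces_general B hinv h h' hiso hiso' hcompl n e e' he v' hv' w hw
    wstar hwstar
end

section
/- Let (g, B, h, h') be a Manin triple with dual bases {e_i} of h and {e^i} of h'. Assume moreover that the Casimir operator of (g, B) acts on g by the scalar 2h^∨ for some complex number h^∨; that is, for dual bases {a_i}, {a^i} of g with respect to B (B(a^i, a_j) = δ^i_j), the operator Σ_i (ad a^i) ∘ (ad a_i) : g → g equals 2h^∨ · id_g. Set v' := Σ_i [e^i, e_i], write v' = w + w* with w ∈ h, w* ∈ h', and define v := w − w*. Then B(v, v) = −(2/3) h^∨ dim h. -/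
/-!
Write `A₁ = ∑ B([e^i, e^j], [e_j, e_i])` and `A₂ = ∑ B([e^i, e_j], [e^j, e_i])`. Pairing the
Casimir identity `C e_i = 2h^∨ e_i` with `e^i` and summing gives `A₁ + A₂ = 2h^∨ n`. Expanding
one bracket of `A₂` in the `B`-dual bases `(e_i, e^i)`, `(e^i, e_i)` of `g` splits `A₂` into two
sums, each of which contracts back to `A₁` because `h` is a subalgebra, so `A₂ = 2A₁`. The Jacobi
identity gives `B(v', v') = A₂ - A₁ = A₁`, and isotropy of `h` and `h'` gives
`B(v, v) = -B(v', v')`.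
-/

open Module

theorem Module.Basis.sum_smul_of_dual {R M ι : Type*} [CommRing R] [AddCommGroup M] [Module R M]
    [Fintype ι] [DecidableEq ι] (b : Basis ι R M) (f : ι → M →ₗ[R] R)
    (hf : ∀ i j, f i (b j) = if i = j then 1 else 0) (x : M) :
    ∑ i, f i x • b i = x := by
  have hcoord : ∀ i, f i = b.coord i := fun i =>
    b.ext fun j => by simp [hf, Finsupp.single_apply, eq_comm]
  simp [hcoord, b.sum_repr]

noncomputable def Module.Basis.ofIsCompl {R M ι κ : Type*} [CommRing R] [AddCommGroup M]
    [Module R M] {p q : Submodule R M} (hpq : IsCompl p q) (b : Basis ι R p) (c : Basis κ R q) :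
    Basis (ι ⊕ κ) R M :=
  (b.prod c).map (p.prodEquivOfIsCompl q hpq)

@[simp]
theorem Module.Basis.ofIsCompl_inl {R M ι κ : Type*} [CommRing R] [AddCommGroup M]
    [Module R M] {p q : Submodule R M} (hpq : IsCompl p q) (b : Basis ι R p) (c : Basis κ R q)
    (i : ι) : Basis.ofIsCompl hpq b c (Sum.inl i) = b i := by
  simp [Basis.ofIsCompl]

@[simp]
theorem Module.Basis.ofIsCompl_inr {R M ι κ : Type*} [CommRing R] [AddCommGroup M]
    [Module R M] {p q : Submodule R M} (hpq : IsCompl p q) (b : Basis ι R p) (c : Basis κ R q)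
    (j : κ) : Basis.ofIsCompl hpq b c (Sum.inr j) = c j := by
  simp [Basis.ofIsCompl]

theorem apply_sub_sub_eq_neg_apply_add_add {R M : Type*} [CommRing R] [AddCommGroup M]
    [Module R M] (B : M →ₗ[R] M →ₗ[R] R) (hsymm : ∀ x y : M, B x y = B y x) {x y : M}
    (hx : B x x = 0) (hy : B y y = 0) : B (x - y) (x - y) = -B (x + y) (x + y) := by
  simp only [map_sub, map_add, LinearMap.sub_apply, LinearMap.add_apply, hx, hy, hsymm y x]
  ring

section InvariantForm

variable {R L : Type*} [CommRing R] [LieRing L] [LieAlgebra R L] (B : L →ₗ[R] L →ₗ[R] R)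

theorem apply_lie_lie_eq_sub (hinv : ∀ a b c : L, B ⁅a, b⁆ c = B a ⁅b, c⁆) (a b c d : L) :
    B ⁅a, b⁆ ⁅c, d⁆ = B ⁅a, d⁆ ⁅c, b⁆ - B ⁅a, c⁆ ⁅d, b⁆ := by
  rw [hinv, hinv, hinv, ← map_sub, leibniz_lie d c b, add_sub_cancel_right, ← lie_skew b,
    ← lie_skew c d, neg_lie, neg_neg]

theorem apply_sum_lie_sum_lie (hinv : ∀ a b c : L, B ⁅a, b⁆ c = B a ⁅b, c⁆) {ι : Type*}
    [Fintype ι] (x y : ι → L) :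
    B (∑ i, ⁅x i, y i⁆) (∑ i, ⁅x i, y i⁆)
      = ∑ i, ∑ j, B ⁅x i, y j⁆ ⁅x j, y i⁆ - ∑ i, ∑ j, B ⁅x i, x j⁆ ⁅y j, y i⁆ := by
  rw [map_sum B, LinearMap.sum_apply, ← Finset.sum_sub_distrib]
  refine Finset.sum_congr rfl fun i _ => ?_
  rw [map_sum, ← Finset.sum_sub_distrib]
  exact Finset.sum_congr rfl fun j _ => apply_lie_lie_eq_sub B hinv _ _ _ _

theorem sum_ad_comp_ad_eq_of_dual {κ : Type*} [Fintype κ] [DecidableEq κ] {c : R}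
    (hcasimir : ∀ (m : ℕ) (a a' : Basis (Fin m) R L),
      (∀ i j, B (a' i) (a j) = if i = j then 1 else 0) →
      ∑ i, LieAlgebra.ad R L (a' i) ∘ₗ LieAlgebra.ad R L (a i) = c • LinearMap.id)
    (a a' : Basis κ R L) (hdual : ∀ i j, B (a' i) (a j) = if i = j then 1 else 0) :
    ∑ i, LieAlgebra.ad R L (a' i) ∘ₗ LieAlgebra.ad R L (a i) = c • LinearMap.id := by
  let σ := Fintype.equivFin κ
  have := hcasimir _ (a.reindex σ) (a'.reindex σ) fun i j => by
    simpa [σ.symm.injective.eq_iff] using hdual (σ.symm i) (σ.symm j)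
  simp only [Basis.reindex_apply] at this
  rwa [σ.symm.sum_comp fun i => LieAlgebra.ad R L (a' i) ∘ₗ LieAlgebra.ad R L (a i)] at this

variable {ι : Type*} [DecidableEq ι] {h h' : Submodule R L}
  (e : Basis ι R h) (e' : Basis ι R h')

theorem apply_ofIsCompl_symm_ofIsCompl (hcompl : IsCompl h h') (hsymm : ∀ x y : L, B x y = B y x)
    (hiso : ∀ x ∈ h, ∀ y ∈ h, B x y = 0) (hiso' : ∀ x ∈ h', ∀ y ∈ h', B x y = 0)
    (he : ∀ i j, B (e' i : L) (e j : L) = if i = j then 1 else 0) (k l : ι ⊕ ι) :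
    B (Basis.ofIsCompl hcompl.symm e' e k)
      (Basis.ofIsCompl hcompl e e' l) = if k = l then 1 else 0 := by
  rcases k with i | i <;> rcases l with j | j
  · simp [he]
  · simp [hiso' _ (e' i).2 _ (e' j).2]
  · simp [hiso _ (e i).2 _ (e j).2]
  · simp [hsymm (e i : L), he, eq_comm]

variable [Fintype ι]

theorem sum_smul_add_sum_smul_eq_self (hcompl : IsCompl h h') (hsymm : ∀ x y : L, B x y = B y x)
    (hiso : ∀ x ∈ h, ∀ y ∈ h, B x y = 0) (hiso' : ∀ x ∈ h', ∀ y ∈ h', B x y = 0)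
    (he : ∀ i j, B (e' i : L) (e j : L) = if i = j then 1 else 0) (x : L) :
    ∑ i, B (e' i) x • (e i : L) + ∑ i, B (e i) x • (e' i : L) = x := by
  have := (Basis.ofIsCompl hcompl e e').sum_smul_of_dual _
    (apply_ofIsCompl_symm_ofIsCompl B e e' hcompl hsymm hiso hiso' he) x
  simpa [Fintype.sum_sum_type] using this

theorem casimir_apply_eq {c : R} (hcompl : IsCompl h h') (hsymm : ∀ x y : L, B x y = B y x)
    (hiso : ∀ x ∈ h, ∀ y ∈ h, B x y = 0) (hiso' : ∀ x ∈ h', ∀ y ∈ h', B x y = 0)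
    (he : ∀ i j, B (e' i : L) (e j : L) = if i = j then 1 else 0)
    (hcasimir : ∀ (m : ℕ) (a a' : Basis (Fin m) R L),
      (∀ i j, B (a' i) (a j) = if i = j then 1 else 0) →
      ∑ i, LieAlgebra.ad R L (a' i) ∘ₗ LieAlgebra.ad R L (a i) = c • LinearMap.id) (x : L) :
    ∑ i, ⁅(e' i : L), ⁅(e i : L), x⁆⁆ + ∑ i, ⁅(e i : L), ⁅(e' i : L), x⁆⁆ = c • x := by
  have := LinearMap.congr_fun (sum_ad_comp_ad_eq_of_dual B hcasimir _ _
    (apply_ofIsCompl_symm_ofIsCompl B e e' hcompl hsymm hiso hiso' he)) x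
  simpa [Fintype.sum_sum_type] using this

theorem apply_eq_sum_add_sum (hcompl : IsCompl h h') (hsymm : ∀ x y : L, B x y = B y x)
    (hiso : ∀ x ∈ h, ∀ y ∈ h, B x y = 0) (hiso' : ∀ x ∈ h', ∀ y ∈ h', B x y = 0)
    (he : ∀ i j, B (e' i : L) (e j : L) = if i = j then 1 else 0) (x y : L) :
    B x y = ∑ i, B x (e i) * B (e' i) y + ∑ i, B x (e' i) * B (e i) y := by
  conv_lhs => rw [← sum_smul_add_sum_smul_eq_self B e e' hcompl hsymm hiso hiso' he y]
  simp [map_sum, mul_comm]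

theorem apply_eq_sum_of_mem (hcompl : IsCompl h h') (hsymm : ∀ x y : L, B x y = B y x)
    (hiso : ∀ x ∈ h, ∀ y ∈ h, B x y = 0) (hiso' : ∀ x ∈ h', ∀ y ∈ h', B x y = 0)
    (he : ∀ i j, B (e' i : L) (e j : L) = if i = j then 1 else 0) (x : L) {y : L} (hy : y ∈ h) :
    B x y = ∑ i, B x (e i) * B (e' i) y := by
  simp [apply_eq_sum_add_sum B e e' hcompl hsymm hiso hiso' he x y, hiso _ (e _).2 _ hy]

theorem casimir_partial_trace_eq {c : R} (hcompl : IsCompl h h') (hsymm : ∀ x y : L, B x y = B y x)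
    (hinv : ∀ a b c : L, B ⁅a, b⁆ c = B a ⁅b, c⁆)
    (hiso : ∀ x ∈ h, ∀ y ∈ h, B x y = 0) (hiso' : ∀ x ∈ h', ∀ y ∈ h', B x y = 0)
    (he : ∀ i j, B (e' i : L) (e j : L) = if i = j then 1 else 0)
    (hcasimir : ∀ (m : ℕ) (a a' : Basis (Fin m) R L),
      (∀ i j, B (a' i) (a j) = if i = j then 1 else 0) →
      ∑ i, LieAlgebra.ad R L (a' i) ∘ₗ LieAlgebra.ad R L (a i) = c • LinearMap.id) :
    ∑ i, ∑ j, B ⁅(e' i : L), (e' j : L)⁆ ⁅(e j : L), (e i : L)⁆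
      + ∑ i, ∑ j, B ⁅(e' i : L), (e j : L)⁆ ⁅(e' j : L), (e i : L)⁆ = c * Fintype.card ι := by
  have htrace : ∑ i, B (e' i) (c • (e i : L)) = c * Fintype.card ι := by
    simp [he, mul_comm]
  rw [← htrace, ← Finset.sum_add_distrib]
  refine Finset.sum_congr rfl fun i _ => ?_
  rw [← casimir_apply_eq B e e' hcompl hsymm hiso hiso' he hcasimir]
  simp [map_sum, hinv]

theorem sum_apply_lie_mixed_eq_two_mul (hcompl : IsCompl h h') (hsymm : ∀ x y : L, B x y = B y x)
    (hinv : ∀ a b c : L, B ⁅a, b⁆ c = B a ⁅b, c⁆) (hsub : ∀ x ∈ h, ∀ y ∈ h, ⁅x, y⁆ ∈ h)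
    (hiso : ∀ x ∈ h, ∀ y ∈ h, B x y = 0) (hiso' : ∀ x ∈ h', ∀ y ∈ h', B x y = 0)
    (he : ∀ i j, B (e' i : L) (e j : L) = if i = j then 1 else 0) :
    ∑ i, ∑ j, B ⁅(e' i : L), (e j : L)⁆ ⁅(e' j : L), (e i : L)⁆
      = 2 * ∑ i, ∑ j, B ⁅(e' i : L), (e' j : L)⁆ ⁅(e j : L), (e i : L)⁆ := by
  have hcontract : ∑ k, ∑ j, B ⁅(e' k : L), (e' j : L)⁆ ⁅(e j : L), (e k : L)⁆
      = ∑ k, ∑ j, ∑ i, B ⁅(e' k : L), (e' j : L)⁆ (e i) * B (e' i) ⁅(e j : L), (e k : L)⁆ :=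
    Finset.sum_congr rfl fun k _ => Finset.sum_congr rfl fun j _ =>
      apply_eq_sum_of_mem B e e' hcompl hsymm hiso hiso' he _ (hsub _ (e j).2 _ (e k).2)
  have hcomponent_h : ∀ i j k : ι,
      B ⁅(e' i : L), (e j : L)⁆ (e k) * B (e' k) ⁅(e' j : L), (e i : L)⁆
      = B ⁅(e' k : L), (e' j : L)⁆ (e i) * B (e' i) ⁅(e j : L), (e k : L)⁆ := by
    intro i j k
    rw [hinv, ← hinv (e' k : L), mul_comm]
  have hcomponent_h' : ∀ i j k : ι,
      B ⁅(e' i : L), (e j : L)⁆ (e' k) * B (e k) ⁅(e' j : L), (e i : L)⁆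
      = B ⁅(e' k : L), (e' i : L)⁆ (e j) * B (e' j) ⁅(e i : L), (e k : L)⁆ := by
    intro i j k
    rw [hsymm, ← hinv (e' k : L), ← hinv (e' j : L), hsymm _ (e k : L)]
  calc ∑ i, ∑ j, B ⁅(e' i : L), (e j : L)⁆ ⁅(e' j : L), (e i : L)⁆
      = ∑ i, ∑ j, ∑ k, B ⁅(e' k : L), (e' j : L)⁆ (e i) * B (e' i) ⁅(e j : L), (e k : L)⁆
        + ∑ i, ∑ j, ∑ k, B ⁅(e' k : L), (e' i : L)⁆ (e j) * B (e' j) ⁅(e i : L), (e k : L)⁆ := by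
        rw [Finset.sum_congr rfl fun i _ => Finset.sum_congr rfl fun j _ =>
          apply_eq_sum_add_sum B e e' hcompl hsymm hiso hiso' he _ _]
        simp only [hcomponent_h, hcomponent_h', Finset.sum_add_distrib]
    _ = 2 * ∑ i, ∑ j, B ⁅(e' i : L), (e' j : L)⁆ ⁅(e j : L), (e i : L)⁆ := by
        rw [two_mul, hcontract]
        -- both sums are the right side of `hcontract` with the summations reordered
        congr 1
        · exact (Finset.sum_congr rfl fun _ _ => Finset.sum_comm).trans
            (Finset.sum_comm.trans (Finset.sum_congr rfl fun _ _ => Finset.sum_comm))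
        · exact (Finset.sum_congr rfl fun _ _ => Finset.sum_comm).trans Finset.sum_comm

end InvariantForm

theorem manin_triple_norm_of_modular_element_general
    {g : Type*} [LieRing g] [LieAlgebra ℂ g] [FiniteDimensional ℂ g]
    (B : g →ₗ[ℂ] g →ₗ[ℂ] ℂ)
    (hsymm : ∀ x y : g, B x y = B y x)
    (hinv : ∀ a b c : g, B ⁅a, b⁆ c = B a ⁅b, c⁆)
    (h h' : Submodule ℂ g)
    (hsub : ∀ x ∈ h, ∀ y ∈ h, ⁅x, y⁆ ∈ h)
    (hiso : ∀ x ∈ h, ∀ y ∈ h, B x y = 0)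
    (hiso' : ∀ x ∈ h', ∀ y ∈ h', B x y = 0)
    (hcompl : IsCompl h h')
    (hv : ℂ)
    (hcasimir : ∀ (m : ℕ) (a a' : Basis (Fin m) ℂ g),
      (∀ i j, B (a' i) (a j) = if i = j then 1 else 0) →
      (∑ i, (LieAlgebra.ad ℂ g (a' i)) ∘ₗ (LieAlgebra.ad ℂ g (a i)))
        = (2 * hv) • (LinearMap.id : g →ₗ[ℂ] g))
    (n : ℕ)
    (e : Basis (Fin n) ℂ h) (e' : Basis (Fin n) ℂ h')
    (he : ∀ i j, B (e' i : g) (e j : g) = if i = j then 1 else 0)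
    (v' : g) (hv' : v' = ∑ i, ⁅(e' i : g), (e i : g)⁆)
    (w : h) (hw : w = h.linearProjOfIsCompl h' hcompl v')
    (wstar : h') (hwstar : wstar = h'.linearProjOfIsCompl h hcompl.symm v')
    (v : g) (hvdef : v = (w : g) - (wstar : g)) :
    B v v = -(2 / 3) * hv * (finrank ℂ h : ℂ) := by
  have hsplit : v' = w + wstar := by
    rw [hw, hwstar]
    exact (Submodule.projection_add_projection_eq_self hcompl v').symm
  have hnorm : B v v = -B v' v' := by
    rw [hvdef, hsplit]
    exact apply_sub_sub_eq_neg_apply_add_add B hsymm (hiso _ w.2 _ w.2) (hiso' _ wstar.2 _ wstar.2)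
  have htrace := casimir_partial_trace_eq B e e' hcompl hsymm hinv hiso hiso' he hcasimir
  have hmixed := sum_apply_lie_mixed_eq_two_mul B e e' hcompl hsymm hinv hsub hiso hiso' he
  rw [Fintype.card_fin] at htrace
  rw [hnorm, hv', apply_sum_lie_sum_lie B hinv, finrank_eq_card_basis e, Fintype.card_fin]
  linear_combination (-1 / 3 : ℂ) * htrace + (-2 / 3 : ℂ) * hmixed

/-- Let `(g, B, h, h')` be a Manin triple, and suppose the Casimir
operator of `(g, B)` acts on `g` by the scalar `2h^∨`: for any pair of dual bases
`{a_i}`, `{a^i}` of `g` with respect to `B`, `Σ_i (ad a^i) ∘ (ad a_i) = 2h^∨ · id`.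
Set `v' = Σ_i [e^i, e_i]`, write `v' = w + w*` with `w ∈ h`, `w* ∈ h'`, and put
`v = w − w*`.  Then `B(v, v) = −(2/3)·h^∨·dim h`. -/
theorem manin_triple_norm_of_modular_element
    {g : Type*} [LieRing g] [LieAlgebra ℂ g] [FiniteDimensional ℂ g]
    (B : g →ₗ[ℂ] g →ₗ[ℂ] ℂ)
    (hsymm : ∀ x y : g, B x y = B y x)
    (hnondeg : ∀ x : g, (∀ y : g, B x y = 0) → x = 0)
    (hinv : ∀ a b c : g, B ⁅a, b⁆ c = B a ⁅b, c⁆)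
    (h h' : Submodule ℂ g)
    (hsub : ∀ x ∈ h, ∀ y ∈ h, ⁅x, y⁆ ∈ h)
    (hsub' : ∀ x ∈ h', ∀ y ∈ h', ⁅x, y⁆ ∈ h')
    (hiso : ∀ x ∈ h, ∀ y ∈ h, B x y = 0)
    (hiso' : ∀ x ∈ h', ∀ y ∈ h', B x y = 0)
    (hcompl : IsCompl h h')
    (hv : ℂ)
    (hcasimir : ∀ (m : ℕ) (a a' : Basis (Fin m) ℂ g),
      (∀ i j, B (a' i) (a j) = if i = j then 1 else 0) →
      (∑ i, (LieAlgebra.ad ℂ g (a' i)) ∘ₗ (LieAlgebra.ad ℂ g (a i)))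
        = (2 * hv) • (LinearMap.id : g →ₗ[ℂ] g))
    (n : ℕ)
    (e : Basis (Fin n) ℂ h) (e' : Basis (Fin n) ℂ h')
    (he : ∀ i j, B (e' i : g) (e j : g) = if i = j then 1 else 0)
    (v' : g) (hv' : v' = ∑ i, ⁅(e' i : g), (e i : g)⁆)
    (w : h) (hw : w = h.linearProjOfIsCompl h' hcompl v')
    (wstar : h') (hwstar : wstar = h'.linearProjOfIsCompl h hcompl.symm v')
    (v : g) (hvdef : v = (w : g) - (wstar : g)) :
    B v v = -(2 / 3) * hv * (finrank ℂ h : ℂ) :=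
  manin_triple_norm_of_modular_element_general B hsymm hinv h h' hsub hiso hiso' hcompl hv hcasimir
    n e e' he v' hv' w hw wstar hwstar v hvdef
end
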